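/- arXiv:1905.06253 — 2 statements merged into one kernel-verified Lean document; each statement's English description precedes it below -/
import Mathlib

section
/- Let G be the generating function of a ℕ-valued random variable N with E[N] > 1. Then G has a fixed point η ∈ [0,1) with G(η) = η, i.e., a fixed point strictly less than 1 exists. -/
/-!
Write `G z = ∑ pₖ zᵏ`. Since `1 - zᵏ = (1 - z)(1 + z + ⋯ + zᵏ⁻¹)`, for every finite set `s` of
indices `1 - G z ≥ (1 - z) q z` with `q z = ∑_{k ∈ s} pₖ (1 + ⋯ + zᵏ⁻¹)`, a polynomial with
`q 1 = ∑_{k ∈ s} k pₖ`. A mean `> 1` provides an `s` with `q 1 > 1`, hence `q z > 1` and so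
`G z < z` for some `z < 1`. As `G 0 ≥ 0`, the intermediate value theorem gives a fixed point
in `[0, z]`.
-/

open Set Topology
open scoped ENNReal

noncomputable def pgf (p : ℕ → ℝ) (z : ℝ) : ℝ := ∑' k, p k * z ^ k

variable {p : ℕ → ℝ}

lemma pgf_nonneg (hp : ∀ k, 0 ≤ p k) {z : ℝ} (hz : 0 ≤ z) : 0 ≤ pgf p z :=
  tsum_nonneg fun k => mul_nonneg (hp k) (pow_nonneg hz k)

lemma norm_mul_pow_le (hp : ∀ k, 0 ≤ p k) {z : ℝ} (hz : z ∈ Icc (0 : ℝ) 1) (k : ℕ) :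
    ‖p k * z ^ k‖ ≤ p k := by
  rw [norm_mul, norm_pow, Real.norm_of_nonneg (hp k), Real.norm_of_nonneg hz.1]
  exact mul_le_of_le_one_right (hp k) (pow_le_one₀ hz.1 hz.2)

lemma hasSum_pgf (hp : ∀ k, 0 ≤ p k) (hps : Summable p) {z : ℝ} (hz : z ∈ Icc (0 : ℝ) 1) :
    HasSum (fun k => p k * z ^ k) (pgf p z) :=
  (Summable.of_norm_bounded hps (norm_mul_pow_le hp hz)).hasSum

lemma continuousOn_pgf (hp : ∀ k, 0 ≤ p k) (hps : Summable p) :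
    ContinuousOn (pgf p) (Icc 0 1) :=
  continuousOn_tsum (fun k => (continuous_const.mul (continuous_pow k)).continuousOn) hps
    fun k _ hz => norm_mul_pow_le hp hz k

lemma exists_finset_lt_sum_of_ofReal_lt_tsum {ι : Type*} {f : ι → ℝ} (hf : ∀ i, 0 ≤ f i)
    {a : ℝ} (h : ENNReal.ofReal a < ∑' i, ENNReal.ofReal (f i)) :
    ∃ s : Finset ι, a < ∑ i ∈ s, f i := by
  rw [ENNReal.tsum_eq_iSup_sum] at h
  obtain ⟨s, hs⟩ := lt_iSup_iff.mp h
  rw [← ENNReal.ofReal_sum_of_nonneg fun i _ => hf i] at hs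
  exact ⟨s, (ENNReal.ofReal_lt_ofReal_iff'.mp hs).1⟩

lemma mul_sum_geom_le_one_sub_pgf (hp : ∀ k, 0 ≤ p k) (hp1 : HasSum p 1) {z : ℝ}
    (hz : z ∈ Icc (0 : ℝ) 1) (s : Finset ℕ) :
    (1 - z) * ∑ k ∈ s, p k * ∑ j ∈ Finset.range k, z ^ j ≤ 1 - pgf p z := by
  have hsum : HasSum (fun k => p k * (1 - z ^ k)) (1 - pgf p z) := by
    simpa only [mul_sub, mul_one] using hp1.sub (hasSum_pgf hp hp1.summable hz)
  calc (1 - z) * ∑ k ∈ s, p k * ∑ j ∈ Finset.range k, z ^ j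
      = ∑ k ∈ s, p k * (1 - z ^ k) := by
        rw [Finset.mul_sum]
        exact Finset.sum_congr rfl fun k _ => by rw [← mul_neg_geom_sum]; ring
    _ ≤ 1 - pgf p z :=
        sum_le_hasSum s (fun k _ => mul_nonneg (hp k) (sub_nonneg.2 (pow_le_one₀ hz.1 hz.2))) hsum

lemma exists_pgf_lt_self (hp : ∀ k, 0 ≤ p k) (hp1 : HasSum p 1) {s : Finset ℕ}
    (hs : 1 < ∑ k ∈ s, (k : ℝ) * p k) : ∃ z ∈ Ico (0 : ℝ) 1, pgf p z < z := by
  set q : ℝ → ℝ := fun z => ∑ k ∈ s, p k * ∑ j ∈ Finset.range k, z ^ j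
  have hq1 : q 1 = ∑ k ∈ s, (k : ℝ) * p k :=
    Finset.sum_congr rfl fun k _ => by simp [mul_comm]
  have hq : Continuous q := by fun_prop
  have hnear : ∀ᶠ z in 𝓝[<] (1 : ℝ), 1 < q z ∧ z ∈ Ioo 0 1 :=
    ((hq.tendsto 1).eventually (eventually_gt_nhds (hq1 ▸ hs))).filter_mono nhdsWithin_le_nhds
      |>.and (Ioo_mem_nhdsLT one_pos)
  obtain ⟨z, hqz, hz0, hz1⟩ := hnear.exists
  refine ⟨z, ⟨hz0.le, hz1⟩, ?_⟩
  have hbound : (1 - z) * q z ≤ 1 - pgf p z :=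
    mul_sum_geom_le_one_sub_pgf hp hp1 ⟨hz0.le, hz1.le⟩ s
  have hgain : (1 - z) * 1 < (1 - z) * q z := mul_lt_mul_of_pos_left hqz (sub_pos.2 hz1)
  linarith

/-- Supercritical branching process: if `N` is a ℕ-valued random variable with pmf `p`
and mean `E[N] > 1` (possibly infinite, expressed in `ℝ≥0∞`), then its generating
function `G(z) = ∑ k, p k z^k` has a fixed point `η ∈ [0,1)`, i.e., a fixed point
strictly less than `1`. -/
theorem pgf_fixedPoint_of_mean_gt_one
    (p : ℕ → ℝ) (hp : ∀ k, 0 ≤ p k) (hp1 : ∑' (k : ℕ), p k = 1)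
    (hmean : 1 < ∑' (k : ℕ), (k : ℝ≥0∞) * ENNReal.ofReal (p k)) :
    ∃ η ∈ Set.Ico (0 : ℝ) 1, ∑' (k : ℕ), p k * η ^ k = η := by
  have hps : Summable p := by
    by_contra h
    simp [tsum_eq_zero_of_not_summable h] at hp1
  have hsum : HasSum p 1 := hp1 ▸ hps.hasSum
  have hmean' : ENNReal.ofReal 1 < ∑' k : ℕ, ENNReal.ofReal ((k : ℝ) * p k) := by
    simpa [ENNReal.ofReal_mul] using hmean
  obtain ⟨s, hs⟩ := exists_finset_lt_sum_of_ofReal_lt_tsum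
    (fun k : ℕ => mul_nonneg k.cast_nonneg (hp k)) hmean'
  obtain ⟨z, ⟨hz0, hz1⟩, hz⟩ := exists_pgf_lt_self hp hsum hs
  obtain ⟨η, hη, hfix⟩ := exists_mem_Icc_isFixedPt
    ((continuousOn_pgf hp hps).mono (Icc_subset_Icc_right hz1.le)) hz0
    (pgf_nonneg hp le_rfl) hz.le
  exact ⟨η, ⟨hη.1, hη.2.trans_lt hz1⟩, hfix⟩
end

section
/- Conversely, under the same setup, if for every c_0 ∈ (0,1), sup_{c≥c_0} |T^{(n)}(c) − f^{-1}(c)| → 0 in probability, then for every t_0 < ∞, sup_{t≤t_0} |a_n^{-1}X^{(n)}(t) − f(t)| → 0 in probability. -/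
open MeasureTheory ProbabilityTheory Filter Set
open scoped Topology

/-!
If the hitting time of every level `f s` (`s ≤ L`) is within `δ` of `s = f⁻¹(f s)` and `δ < η`,
then at time `t` the normalised path `y` has not yet reached `f (t + η)` but has already reached
`f (t - η)`, so `f (t + η) < y t ≤ f (t - η)`; uniform continuity of `f` on `[0, L]` then puts
`y t` within `ε` of `f t`, uniformly in `t ∈ [0, L - η]`. The hitting-time hypothesis holds off
an event of vanishing probability, and so does the conclusion.
-/

/-- Equal to `0` when the level `c` is never reached, as `sInf ∅ = 0`. -/
noncomputable def hittingTime (y : ℝ → ℝ) (c : ℝ) : ℝ :=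
  sInf {t | 0 ≤ t ∧ y t ≤ c}

section HittingTime

variable {y : ℝ → ℝ} {c t : ℝ}

theorem hittingTime_div {x : ℝ → ℝ} {A : ℝ} (hA : 0 < A) :
    hittingTime (fun t => x t / A) c = sInf {t | 0 ≤ t ∧ x t ≤ c * A} := by
  simp only [hittingTime, div_le_iff₀ hA]

theorem lt_of_lt_hittingTime (ht : 0 ≤ t) (h : t < hittingTime y c) : c < y t := by
  by_contra! hle
  exact h.not_ge (csInf_le ⟨0, fun _ hs => hs.1⟩ ⟨ht, hle⟩)

theorem exists_le_of_hittingTime_ne_zero (h : hittingTime y c ≠ 0) :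
    ∃ s, 0 ≤ s ∧ y s ≤ c := by
  by_contra! hnone
  refine h ?_
  rw [hittingTime, Set.eq_empty_of_forall_notMem (s := {t | 0 ≤ t ∧ y t ≤ c})
    fun s hs => (hnone s hs.1).not_ge hs.2, Real.sInf_empty]

theorem le_of_hittingTime_lt (hy : Antitone y) (hc : ∃ s, 0 ≤ s ∧ y s ≤ c)
    (h : hittingTime y c < t) : y t ≤ c := by
  obtain ⟨s, ⟨-, hsc⟩, hst⟩ := exists_lt_of_csInf_lt hc h
  exact (hy hst.le).trans hsc

end HittingTime

theorem abs_sub_le_of_abs_hittingTime_sub_le {y f finv : ℝ → ℝ} (hy : Antitone y)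
    (hy0 : y 0 = 1) (hf0 : f 0 = 1) (hf : AntitoneOn f (Ici 0))
    (hfinv : ∀ t ∈ Ici 0, finv (f t) = t) {t₀ L η δ ε : ℝ} (hL : t₀ + η ≤ L)
    (hδ : 0 ≤ δ) (hδη : δ < η)
    (hmod : ∀ u ∈ Icc 0 L, ∀ v ∈ Icc 0 L, dist u v ≤ η → dist (f u) (f v) ≤ ε)
    (hT : ∀ c ∈ Icc (f L) 1, |hittingTime y c - finv c| ≤ δ)
    {t : ℝ} (ht : t ∈ Icc 0 t₀) : |y t - f t| ≤ ε := by
  obtain ⟨ht0, htt₀⟩ := ht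
  have hL0 : 0 ≤ L := by linarith
  have hTlevel : ∀ s ∈ Icc 0 L, |hittingTime y (f s) - s| ≤ δ := fun s hs => by
    have hfs_le : f s ≤ 1 := hf0 ▸ hf self_mem_Ici hs.1 hs.1
    simpa only [hfinv s hs.1] using hT (f s) ⟨hf hs.1 hL0 hs.2, hfs_le⟩
  have hclose : ∀ s ∈ Icc 0 L, |t - s| ≤ η → |f t - f s| ≤ ε := fun s hs hts => by
    simpa only [Real.dist_eq] using hmod t ⟨ht0, by linarith⟩ s hs (by rwa [Real.dist_eq])
  have hlow : f t - y t ≤ ε := by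
    have hs : t + η ∈ Icc 0 L := ⟨by linarith, by linarith⟩
    have hyt : f (t + η) < y t :=
      lt_of_lt_hittingTime ht0 (by linarith [(abs_le.mp (hTlevel _ hs)).1])
    have hft := (abs_le.mp (hclose _ hs (by rw [sub_add_cancel_left, abs_neg,
      abs_of_pos (by linarith)]))).2
    linarith
  have hupp : y t - f t ≤ ε := by
    rcases lt_or_ge t η with htη | htη
    · have hft := (abs_le.mp (hclose 0 ⟨le_rfl, hL0⟩
        (by rw [sub_zero, abs_of_nonneg ht0]; exact htη.le))).1
      linarith [hy ht0, hy0, hf0]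
    · have hs : t - η ∈ Icc 0 L := ⟨by linarith, by linarith⟩
      -- The level `f L` is reached, since its hitting time is within `δ < L` of `L`.
      have hreached : ∃ r, 0 ≤ r ∧ y r ≤ f (t - η) := by
        obtain ⟨r, hr0, hr⟩ := exists_le_of_hittingTime_ne_zero (c := f L) fun h0 => by
          have := hTlevel L ⟨hL0, le_rfl⟩
          rw [h0, zero_sub, abs_neg, abs_of_nonneg hL0] at this
          linarith
        exact ⟨r, hr0, hr.trans (hf hs.1 hL0 hs.2)⟩
      have hyt : y t ≤ f (t - η) :=
        le_of_hittingTime_lt hy hreached (by linarith [(abs_le.mp (hTlevel _ hs)).2])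
      have hft := (abs_le.mp (hclose _ hs (by rw [sub_sub_cancel, abs_of_pos (by linarith)]))).1
      linarith
  exact abs_sub_le_iff.mpr ⟨hupp, hlow⟩

theorem tendsto_measure_zero_of_eventually_subset {ι : Type*} {l : Filter ι} {Ω : ι → Type*}
    [∀ i, MeasurableSpace (Ω i)] (μ : ∀ i, Measure (Ω i)) {A B : ∀ i, Set (Ω i)}
    (hB : Tendsto (fun i => μ i (B i)) l (𝓝 0)) (hAB : ∀ᶠ i in l, A i ⊆ B i) :
    Tendsto (fun i => μ i (A i)) l (𝓝 0) :=
  tendsto_of_tendsto_of_tendsto_of_le_of_le' tendsto_const_nhds hB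
    (Eventually.of_forall fun _ => zero_le) (hAB.mono fun _ h => measure_mono h)

theorem hitting_times_to_death_process_general
    {Ω : ℕ → Type*} [∀ n, MeasureSpace (Ω n)]
    (a : ℕ → ℕ) (ha : Tendsto a atTop atTop)
    (X : ∀ n, Ω n → ℝ → ℕ)
    (hX0 : ∀ n ω, X n ω 0 = a n)
    (hmono : ∀ n ω, Antitone (X n ω))
    (f : ℝ → ℝ) (hf0 : f 0 = 1)
    (hfrange : ∀ t ∈ Set.Ici (0 : ℝ), f t ∈ Set.Ioc (0 : ℝ) 1)
    (hfanti : StrictAntiOn f (Set.Ici (0 : ℝ)))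
    (hfcont : ContinuousOn f (Set.Ici (0 : ℝ)))
    (finv : ℝ → ℝ)
    (hfinv : ∀ t ∈ Set.Ici (0 : ℝ), finv (f t) = t)
    (T : ∀ n, Ω n → ℝ → ℝ)
    (hT : ∀ n ω c, T n ω c = sInf {t : ℝ | 0 ≤ t ∧ (X n ω t : ℝ) ≤ c * a n})
    (hconc : ∀ c₀ ∈ Set.Ioo (0 : ℝ) 1, ∀ ε > (0 : ℝ),
      Tendsto (fun n => (ℙ : Measure (Ω n))
          {ω | ∃ c ∈ Set.Icc c₀ 1, ε < |T n ω c - finv c|})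
        atTop (𝓝 0)) :
    ∀ t₀ : ℝ, ∀ ε > (0 : ℝ),
      Tendsto (fun n => (ℙ : Measure (Ω n))
          {ω | ∃ t ∈ Set.Icc (0 : ℝ) t₀, ε < |(X n ω t : ℝ) / a n - f t|})
        atTop (𝓝 0) := by
  intro t₀ ε hε
  set L := max t₀ 0 + 1
  have hL : 0 < L := by positivity
  obtain ⟨η, hη, hmod⟩ := Metric.uniformContinuousOn_iff_le.mp
    ((isCompact_Icc (a := 0) (b := L)).uniformContinuousOn_of_continuous
      (hfcont.mono Icc_subset_Ici_self)) ε hε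
  set η' := min η 1
  have hη' : 0 < η' := lt_min hη one_pos
  have hfL : f L ∈ Ioo 0 1 :=
    ⟨(hfrange L hL.le).1, hf0 ▸ hfanti self_mem_Ici (mem_Ici.mpr hL.le) hL⟩
  refine tendsto_measure_zero_of_eventually_subset _ (hconc (f L) hfL (η' / 2) (by positivity)) ?_
  filter_upwards [ha.eventually_gt_atTop 0] with n han ω ⟨t, ht, hεt⟩
  by_contra hfar
  have ha' : (0 : ℝ) < a n := Nat.cast_pos.mpr han
  set y : ℝ → ℝ := fun t => (X n ω t : ℝ) / a n
  have hy : Antitone y := fun _ _ h =>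
    div_le_div_of_nonneg_right (Nat.cast_le.mpr (hmono n ω h)) ha'.le
  have hy0 : y 0 = 1 := by simp [y, hX0, ha'.ne']
  have hnear : ∀ c ∈ Icc (f L) 1, |hittingTime y c - finv c| ≤ η' / 2 := fun c hc => by
    rw [hittingTime_div ha', ← hT]
    exact not_lt.mp fun h => hfar ⟨c, hc, h⟩
  have hLη : t₀ + η' ≤ L := by linarith [le_max_left t₀ 0, min_le_right η 1]
  exact hεt.not_ge (abs_sub_le_of_abs_hittingTime_sub_le hy hy0 hf0 hfanti.antitoneOn hfinv hLη
    (by positivity) (by linarith) (fun u hu v hv h => hmod u hu v hv (h.trans (min_le_left _ _)))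
    hnear ht)

/-- Concentration of hitting times transfers back to the death process.  Let
`X^{(n)}` be pure death processes (non-increasing ℕ-valued paths) with deterministic
initial value `X^{(n)}(0) = a_n → ∞`, and let `f : [0,∞) → (0,1]` be strictly
decreasing with `f(0) = 1`, `f` and its inverse `finv` continuous.  If for every
`c₀ ∈ (0,1)`, `sup_{c ≥ c₀} |T^{(n)}(c) − finv(c)| → 0` in probability, where
`T^{(n)}(c) = min{t : a_n⁻¹ X^{(n)}(t) ≤ c}`, then for every `t₀ < ∞`,
`sup_{t ≤ t₀} |a_n⁻¹ X^{(n)}(t) − f(t)| → 0` in probability. -/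
theorem hitting_times_to_death_process
    {Ω : ℕ → Type*} [∀ n, MeasureSpace (Ω n)]
    [∀ n, IsProbabilityMeasure (ℙ : Measure (Ω n))]
    (a : ℕ → ℕ) (ha : Tendsto a atTop atTop)
    (X : ∀ n, Ω n → ℝ → ℕ)
    (hX0 : ∀ n ω, X n ω 0 = a n)
    (hmono : ∀ n ω, Antitone (X n ω))
    (f : ℝ → ℝ) (hf0 : f 0 = 1)
    (hfrange : ∀ t ∈ Set.Ici (0 : ℝ), f t ∈ Set.Ioc (0 : ℝ) 1)
    (hfanti : StrictAntiOn f (Set.Ici (0 : ℝ)))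
    (hfcont : ContinuousOn f (Set.Ici (0 : ℝ)))
    (finv : ℝ → ℝ)
    (hfinv : ∀ t ∈ Set.Ici (0 : ℝ), finv (f t) = t)
    (hfinvcont : ContinuousOn finv (f '' Set.Ici (0 : ℝ)))
    (T : ∀ n, Ω n → ℝ → ℝ)
    (hT : ∀ n ω c, T n ω c = sInf {t : ℝ | 0 ≤ t ∧ (X n ω t : ℝ) ≤ c * a n})
    (hconc : ∀ c₀ ∈ Set.Ioo (0 : ℝ) 1, ∀ ε > (0 : ℝ),
      Tendsto (fun n => (ℙ : Measure (Ω n))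
          {ω | ∃ c ∈ Set.Icc c₀ 1, ε < |T n ω c - finv c|})
        atTop (𝓝 0)) :
    ∀ t₀ : ℝ, ∀ ε > (0 : ℝ),
      Tendsto (fun n => (ℙ : Measure (Ω n))
          {ω | ∃ t ∈ Set.Icc (0 : ℝ) t₀, ε < |(X n ω t : ℝ) / a n - f t|})
        atTop (𝓝 0) :=
  hitting_times_to_death_process_general a ha X hX0 hmono f hf0 hfrange hfanti hfcont finv hfinv T
    hT hconc
end
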